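/- Let G and H be finite groups and Ω a finite left-free (H,G)-biset. Fix a set R of representatives of H-orbits on Ω, and for g ∈ G, x ∈ R define h_{g,x} ∈ H by x·g = h_{g,x}·σ_g(x) with σ_g(x) ∈ R. Then the map g ↦ ∏_{x ∈ R} h_{g,x} (image in the abelianization H/[H,H]) is a group homomorphism G → H/[H,H], and it is independent of the choice of R. -/
import Mathlib


/-- The generalized transfer `Ver_Ω : g ↦ ∏_{x ∈ R} h_{g,x}` (in `H/[H,H]`) associated to a
finite left-free `(H,G)`-biset `Ω` is a group homomorphism, and it is independent of the
choice of the set `R` of representatives of `H`-orbits. -/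
theorem stmt7 (H G Ω : Type) [Group H] [Group G] [Finite Ω] [MulAction H Ω]
    (r : Ω → G → Ω)
    (hr1 : ∀ x, r x 1 = x)
    (hrm : ∀ x g g', r x (g * g') = r (r x g) g')
    (hcomm : ∀ (h : H) (x : Ω) (g : G), r (h • x) g = h • r x g)
    (hfree : ∀ (h : H) (x : Ω), h • x = x → h = 1)
    (R : Finset Ω)
    (hR : ∀ x : Ω, ∃! q : H × {y // y ∈ R}, x = q.1 • (q.2 : Ω))
    (hfun : G → {y // y ∈ R} → H)
    (σ : G → {y // y ∈ R} → {y // y ∈ R})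
    (hdef : ∀ (g : G) (x : {y // y ∈ R}), r (x : Ω) g = hfun g x • (σ g x : Ω))
    (R' : Finset Ω)
    (hR' : ∀ x : Ω, ∃! q : H × {y // y ∈ R'}, x = q.1 • (q.2 : Ω))
    (hfun' : G → {y // y ∈ R'} → H)
    (σ' : G → {y // y ∈ R'} → {y // y ∈ R'})
    (hdef' : ∀ (g : G) (x : {y // y ∈ R'}), r (x : Ω) g = hfun' g x • (σ' g x : Ω)) :
    (∀ g g' : G,
      (∏ x : {y // y ∈ R}, Abelianization.of (hfun (g * g') x)) =
        (∏ x : {y // y ∈ R}, Abelianization.of (hfun g x)) *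
          ∏ x : {y // y ∈ R}, Abelianization.of (hfun g' x)) ∧
    ∀ g : G,
      (∏ x : {y // y ∈ R}, Abelianization.of (hfun g x)) =
        ∏ x : {y // y ∈ R'}, Abelianization.of (hfun' g x) := by
  classical
  -- uniqueness of decomposition for R
  have uniq : ∀ (h1 h2 : H) (y1 y2 : {y // y ∈ R}),
      h1 • (y1 : Ω) = h2 • (y2 : Ω) → h1 = h2 ∧ y1 = y2 := by
    intro h1 h2 y1 y2 he
    obtain ⟨q, hq, hq2⟩ := hR (h1 • (y1 : Ω))
    have e1 := hq2 (h1, y1) rfl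
    have e2 := hq2 (h2, y2) he
    have : (h1, y1) = ((h2, y2) : H × {y // y ∈ R}) := e1.trans e2.symm
    exact ⟨congrArg Prod.fst this, congrArg Prod.snd this⟩
  have uniq' : ∀ (h1 h2 : H) (y1 y2 : {y // y ∈ R'}),
      h1 • (y1 : Ω) = h2 • (y2 : Ω) → h1 = h2 ∧ y1 = y2 := by
    intro h1 h2 y1 y2 he
    obtain ⟨q, hq, hq2⟩ := hR' (h1 • (y1 : Ω))
    have e1 := hq2 (h1, y1) rfl
    have e2 := hq2 (h2, y2) he
    have : (h1, y1) = ((h2, y2) : H × {y // y ∈ R'}) := e1.trans e2.symm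
    exact ⟨congrArg Prod.fst this, congrArg Prod.snd this⟩
  -- cocycle identities
  have hone : ∀ x : {y // y ∈ R}, hfun 1 x = 1 ∧ σ 1 x = x := by
    intro x
    have : hfun 1 x • (σ 1 x : Ω) = (1 : H) • (x : Ω) := by
      rw [one_smul, ← hdef 1 x, hr1]
    exact uniq _ _ _ _ this
  have hcoc : ∀ (g g' : G) (x : {y // y ∈ R}),
      hfun (g * g') x = hfun g x * hfun g' (σ g x) ∧ σ (g * g') x = σ g' (σ g x) := by
    intro g g' x
    have : hfun (g * g') x • (σ (g * g') x : Ω)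
        = (hfun g x * hfun g' (σ g x)) • (σ g' (σ g x) : Ω) := by
      rw [← hdef (g * g') x, hrm, hdef g x, hcomm, hdef g' (σ g x), mul_smul]
    exact uniq _ _ _ _ this
  -- σ g is a bijection
  have hσinv : ∀ (g : G) (x : {y // y ∈ R}), σ g⁻¹ (σ g x) = x := by
    intro g x
    have h1 := (hcoc g g⁻¹ x).2
    rw [mul_inv_cancel] at h1
    rw [← h1, (hone x).2]
  have hσinv2 : ∀ (g : G) (x : {y // y ∈ R}), σ g (σ g⁻¹ x) = x := by
    intro g x
    have h1 := (hcoc g⁻¹ g x).2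
    rw [inv_mul_cancel] at h1
    rw [← h1, (hone x).2]
  have eσ : ∀ g : G, Function.Bijective (σ g) := fun g =>
    Function.bijective_iff_has_inverse.mpr ⟨σ g⁻¹, hσinv g, hσinv2 g⟩
  constructor
  · -- multiplicativity
    intro g g'
    calc (∏ x : {y // y ∈ R}, Abelianization.of (hfun (g * g') x))
        = ∏ x : {y // y ∈ R},
            Abelianization.of (hfun g x) * Abelianization.of (hfun g' (σ g x)) := by
          refine Finset.prod_congr rfl fun x _ => ?_
          rw [(hcoc g g' x).1, map_mul]
      _ = (∏ x : {y // y ∈ R}, Abelianization.of (hfun g x)) *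
            ∏ x : {y // y ∈ R}, Abelianization.of (hfun g' (σ g x)) :=
          Finset.prod_mul_distrib
      _ = (∏ x : {y // y ∈ R}, Abelianization.of (hfun g x)) *
            ∏ x : {y // y ∈ R}, Abelianization.of (hfun g' x) := by
          rw [(eσ g).prod_comp (fun x => Abelianization.of (hfun g' x))]
  · -- independence of representatives
    intro g
    -- decompose elements of R over R'
    choose q hq using fun x : {y // y ∈ R} => (hR' (x : Ω)).exists
    set t : {y // y ∈ R} → H := fun x => (q x).1 with ht
    set ρ : {y // y ∈ R} → {y // y ∈ R'} := fun x => (q x).2 with hρ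
    choose q' hq' using fun y : {y // y ∈ R'} => (hR (y : Ω)).exists
    set t' : {y // y ∈ R'} → H := fun y => (q' y).1
    set ρ' : {y // y ∈ R'} → {y // y ∈ R} := fun y => (q' y).2
    have hx : ∀ x : {y // y ∈ R}, (x : Ω) = t x • (ρ x : Ω) := hq
    have hy : ∀ y : {y // y ∈ R'}, (y : Ω) = t' y • (ρ' y : Ω) := hq'
    -- ρ is a bijection
    have hρinv : ∀ x : {y // y ∈ R}, ρ' (ρ x) = x := by
      intro x
      have : (t x * t' (ρ x)) • (ρ' (ρ x) : Ω) = (1 : H) • (x : Ω) := by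
        rw [one_smul, mul_smul, ← hy (ρ x), ← hx x]
      exact (uniq _ _ _ _ this).2
    have hρinv2 : ∀ y : {y // y ∈ R'}, ρ (ρ' y) = y := by
      intro y
      have : (t' y * t (ρ' y)) • (ρ (ρ' y) : Ω) = (1 : H) • (y : Ω) := by
        rw [one_smul, mul_smul, ← hx (ρ' y), ← hy y]
      exact (uniq' _ _ _ _ this).2
    have eρ : Function.Bijective ρ :=
      Function.bijective_iff_has_inverse.mpr ⟨ρ', hρinv, hρinv2⟩
    -- the key relation
    have rel : ∀ x : {y // y ∈ R},
        t x * hfun' g (ρ x) = hfun g x * t (σ g x) ∧ ρ (σ g x) = σ' g (ρ x) := by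
      intro x
      have : (hfun g x * t (σ g x)) • (ρ (σ g x) : Ω)
          = (t x * hfun' g (ρ x)) • (σ' g (ρ x) : Ω) := by
        rw [mul_smul, ← hx (σ g x), ← hdef g x, mul_smul, ← hdef' g (ρ x), ← hcomm,
          ← hx x]
      have h := uniq' _ _ _ _ this
      exact ⟨h.1.symm, h.2⟩
    have key : (∏ x : {y // y ∈ R}, Abelianization.of (hfun g x)) *
        (∏ x : {y // y ∈ R}, Abelianization.of (t (σ g x)))
        = (∏ x : {y // y ∈ R}, Abelianization.of (t x)) *
          ∏ x : {y // y ∈ R}, Abelianization.of (hfun' g (ρ x)) := by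
      rw [← Finset.prod_mul_distrib, ← Finset.prod_mul_distrib]
      refine Finset.prod_congr rfl fun x _ => ?_
      rw [← map_mul, ← map_mul, (rel x).1]
    have e1 : (∏ x : {y // y ∈ R}, Abelianization.of (t (σ g x)))
        = ∏ x : {y // y ∈ R}, Abelianization.of (t x) :=
      (eσ g).prod_comp (fun x => Abelianization.of (t x))
    have e2 : (∏ x : {y // y ∈ R}, Abelianization.of (hfun' g (ρ x)))
        = ∏ y : {y // y ∈ R'}, Abelianization.of (hfun' g y) :=
      eρ.prod_comp (fun y => Abelianization.of (hfun' g y))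
    rw [e1, e2, mul_comm] at key
    exact mul_left_cancel key
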